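/- arXiv:1109.2546 — 2 statements merged into one kernel-verified Lean document; each statement's English description precedes it below -/
import Mathlib

section
/- For every real q > 1, lim_{n→∞} G_{2n+1}(q) · q^{−(2n+1)²/4} = θ₂(0, q^{−1}) / φ(q^{−1}), where θ₂(0,x) = Σ_{k ∈ ℤ} x^{(k+1/2)²} and φ(x) = ∏_{m=1}^{∞} (1 − x^m). -/
open scoped BigOperators
open Filter Topology

/-- The Gaussian (`q`-)binomial coefficient `C(m,k)_q` as a polynomial with integer
coefficients, defined via the `q`-Pascal recurrence
`C(m+1, k+1)_q = C(m, k)_q + q^(k+1) * C(m, k+1)_q`. -/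
noncomputable def gaussBinomial : ℕ → ℕ → Polynomial ℤ
  | _, 0 => 1
  | 0, _ + 1 => 0
  | m + 1, k + 1 => gaussBinomial m k + Polynomial.X ^ (k + 1) * gaussBinomial m (k + 1)

/-- The classical Galois number `G_N(q) = ∑_{k=0}^N C(N,k)_q`, evaluated at a real `q`. -/
noncomputable def galoisNumber (N : ℕ) (q : ℝ) : ℝ :=
  ∑ k ∈ Finset.range (N + 1), Polynomial.aeval q (gaussBinomial N k)

/-- The Jacobi theta value `θ₂(0,x) = ∑_{k ∈ ℤ} x^{(k+1/2)²}` (real powers). -/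
noncomputable def theta2 (x : ℝ) : ℝ := ∑' k : ℤ, x ^ (((k : ℝ) + 1 / 2) ^ 2)

/-- The Jacobi theta value `θ₃(0,x) = ∑_{k ∈ ℤ} x^{k²}` (real powers). -/
noncomputable def theta3 (x : ℝ) : ℝ := ∑' k : ℤ, x ^ ((k : ℝ) ^ 2)

/-- The Jacobi theta value `θ₄(0,x) = ∑_{k ∈ ℤ} (−1)^k x^{k²}` (real powers). -/
noncomputable def theta4 (x : ℝ) : ℝ := ∑' k : ℤ, (-1 : ℝ) ^ k * x ^ ((k : ℝ) ^ 2)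

/-- Euler's function `φ(x) = ∏_{m=1}^∞ (1 − x^m)`. -/
noncomputable def eulerFn (x : ℝ) : ℝ := ∏' m : ℕ, (1 - x ^ (m + 1))

/-! ### Auxiliary definitions and lemmas -/

/-- Partial products of Euler's function. -/
noncomputable def Dp (x : ℝ) (n : ℕ) : ℝ := ∏ i ∈ Finset.range n, (1 - x ^ (i + 1))

section EulerFacts
variable {x : ℝ} (hx0 : 0 < x) (hx1 : x < 1)
include hx0 hx1

lemma factor_pos (m : ℕ) : 0 < 1 - x ^ (m + 1) := by
  have : x ^ (m + 1) < 1 := pow_lt_one₀ hx0.le hx1 (Nat.succ_ne_zero m)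
  linarith

omit hx1 in
lemma factor_le_one (m : ℕ) : 1 - x ^ (m + 1) ≤ 1 := by
  have : 0 < x ^ (m + 1) := pow_pos hx0 _
  linarith

lemma Dp_pos (n : ℕ) : 0 < Dp x n :=
  Finset.prod_pos fun i _ => factor_pos hx0 hx1 i

lemma Dp_anti : Antitone (Dp x) := by
  refine antitone_nat_of_succ_le fun n => ?_
  rw [Dp, Finset.prod_range_succ]
  calc Dp x n * (1 - x ^ (n + 1)) ≤ Dp x n * 1 :=
        mul_le_mul_of_nonneg_left (factor_le_one hx0 n) (Dp_pos hx0 hx1 n).le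
    _ = Dp x n := mul_one _

lemma summable_log : Summable (fun m : ℕ => Real.log (1 - x ^ (m + 1))) := by
  have hb : Summable (fun m : ℕ => (1 - x)⁻¹ * x ^ (m + 1)) :=
    ((summable_geometric_of_lt_one hx0.le hx1).mul_left _).comp_injective
      (add_left_injective 1)
  refine Summable.of_norm_bounded hb fun m => ?_
  have h1 : 0 < 1 - x ^ (m + 1) := factor_pos hx0 hx1 m
  have hle : x ^ (m + 1) ≤ x := by
    calc x ^ (m + 1) ≤ x ^ 1 := pow_le_pow_of_le_one hx0.le hx1.le (by omega)
      _ = x := pow_one x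
  rw [Real.norm_eq_abs, abs_of_nonpos (Real.log_nonpos (by linarith) (by
    have : 0 < x ^ (m + 1) := pow_pos hx0 _; linarith))]
  have key : Real.log ((1 - x ^ (m + 1))⁻¹) ≤ (1 - x ^ (m + 1))⁻¹ - 1 :=
    Real.log_le_sub_one_of_pos (by positivity)
  rw [Real.log_inv] at key
  have h2 : (1 - x ^ (m + 1))⁻¹ - 1 = x ^ (m + 1) / (1 - x ^ (m + 1)) := by
    field_simp
    ring
  rw [h2] at key
  have h3 : x ^ (m + 1) / (1 - x ^ (m + 1)) ≤ x ^ (m + 1) / (1 - x) :=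
    div_le_div_of_nonneg_left (pow_pos hx0 _).le (by linarith) (by linarith)
  have h4 : x ^ (m + 1) / (1 - x) = (1 - x)⁻¹ * x ^ (m + 1) := div_eq_inv_mul _ _
  rw [h4] at h3
  linarith

lemma hasProd_euler :
    HasProd (fun m : ℕ => 1 - x ^ (m + 1))
      (Real.exp (∑' m : ℕ, Real.log (1 - x ^ (m + 1)))) := by
  have hs := (summable_log hx0 hx1).hasSum
  have h : Tendsto (fun s : Finset ℕ => Real.exp (∑ m ∈ s, Real.log (1 - x ^ (m + 1))))
      atTop (𝓝 (Real.exp (∑' m : ℕ, Real.log (1 - x ^ (m + 1))))) :=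
    (Real.continuous_exp.tendsto _).comp hs
  refine h.congr fun s => ?_
  rw [Real.exp_sum]
  exact Finset.prod_congr rfl fun i _ => Real.exp_log (factor_pos hx0 hx1 i)

lemma eulerFn_pos : 0 < eulerFn x := by
  rw [eulerFn, (hasProd_euler hx0 hx1).tprod_eq]
  exact Real.exp_pos _

lemma tendsto_Dp : Tendsto (Dp x) atTop (𝓝 (eulerFn x)) := by
  have h := (hasProd_euler hx0 hx1).tendsto_prod_nat
  rw [eulerFn, (hasProd_euler hx0 hx1).tprod_eq]
  exact h

lemma eulerFn_le_Dp (k : ℕ) : eulerFn x ≤ Dp x k := by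
  refine le_of_tendsto (tendsto_Dp hx0 hx1) ?_
  filter_upwards [eventually_ge_atTop k] with m hm
  exact Dp_anti hx0 hx1 hm

end EulerFacts

lemma gauss_eq_zero : ∀ N k : ℕ, N < k → gaussBinomial N k = 0 := by
  intro N
  induction N with
  | zero => intro k hk
            match k, hk with
            | k + 1, _ => rfl
  | succ n ih =>
      intro k hk
      match k, hk with
      | k + 1, hk =>
        rw [gaussBinomial, ih k (by omega), ih (k + 1) (by omega)]
        simp

section GaussFacts
variable (q : ℝ)

/-- Evaluation of the Gaussian binomial at a real number. -/
noncomputable def cg (N k : ℕ) : ℝ := Polynomial.aeval q (gaussBinomial N k)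

lemma cg_zero (N k : ℕ) (h : N < k) : cg q N k = 0 := by
  rw [cg, gauss_eq_zero N k h]; simp

lemma cg_zero' (N : ℕ) : cg q N 0 = 1 := by
  rw [cg]
  have h : gaussBinomial N 0 = 1 := by cases N <;> rfl
  rw [h]; simp

lemma cg_succ (N k : ℕ) : cg q (N + 1) (k + 1) = cg q N k + q ^ (k + 1) * cg q N (k + 1) := by
  rw [cg, cg, cg, gaussBinomial]
  simp [mul_comm]

noncomputable def Ap (N k : ℕ) : ℝ := ∏ i ∈ Finset.range k, (q ^ (N - i) - 1)
noncomputable def Bp (k : ℕ) : ℝ := ∏ i ∈ Finset.range k, (q ^ (i + 1) - 1)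

lemma Ap_succ_top (N k : ℕ) : Ap q (N + 1) (k + 1) = (q ^ (N + 1) - 1) * Ap q N k := by
  rw [Ap, Finset.prod_range_succ']
  simp only [Nat.sub_zero]
  rw [Ap, mul_comm]
  congr 1
  refine Finset.prod_congr rfl fun i _ => ?_
  congr 2
  omega

lemma cg_prod_formula : ∀ N k : ℕ, k ≤ N → cg q N k * Bp q k = Ap q N k := by
  intro N
  induction N with
  | zero => intro k hk
            interval_cases k
            simp [cg_zero', Ap, Bp]
  | succ n ih =>
      intro k hk
      match k with
      | 0 => simp [cg_zero', Ap, Bp]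
      | k + 1 =>
        rw [cg_succ, Ap_succ_top]
        rcases Nat.lt_or_ge k n with hlt | hge
        · have h1 := ih k (by omega)
          have h2 := ih (k + 1) (by omega)
          have hB : Bp q (k + 1) = Bp q k * (q ^ (k + 1) - 1) := Finset.prod_range_succ _ _
          have hA : Ap q n (k + 1) = Ap q n k * (q ^ (n - k) - 1) := Finset.prod_range_succ _ _
          rw [hB, hA] at h2
          rw [hB]
          have hq : q ^ (k + 1) * q ^ (n - k) = q ^ (n + 1) := by
            rw [← pow_add]; congr 1; omega
          linear_combination (q ^ (k + 1) - 1) * h1 + q ^ (k + 1) * h2 + Ap q n k * hq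
        · have hk' : k = n := by omega
          subst hk'
          have h1 := ih k (le_refl k)
          have h2 : cg q k (k + 1) = 0 := cg_zero q k (k + 1) (by omega)
          have hB : Bp q (k + 1) = Bp q k * (q ^ (k + 1) - 1) := Finset.prod_range_succ _ _
          rw [h2, hB]
          have hA : Ap q k k = Bp q k := by
            rw [Ap, Bp]
            apply Finset.prod_nbij' (fun i => k - 1 - i) (fun i => k - 1 - i) <;>
              intro a ha <;> simp_all [Finset.mem_range] <;> first | omega | (congr 2; omega)
          rw [hA] at h1 ⊢
          linear_combination (q ^ (k + 1) - 1) * h1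

end GaussFacts

lemma sum_aux : ∀ (k N : ℕ), k ≤ N →
    ∑ i ∈ Finset.range k, (N - i) = k * (N - k) + ∑ i ∈ Finset.range k, (i + 1) := by
  intro k
  induction k with
  | zero => simp
  | succ k ih =>
      intro N hk
      rw [Finset.sum_range_succ, ih N (by omega), Finset.sum_range_succ]
      obtain ⟨a, ha⟩ : ∃ a, N - k = a + 1 := ⟨N - k - 1, by omega⟩
      have h2 : N - (k + 1) = a := by omega
      rw [ha, h2]
      ring

lemma prod_q_aux (q : ℝ) (k N : ℕ) (hk : k ≤ N) :
    ∏ i ∈ Finset.range k, q ^ (N - i)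
      = q ^ (k * (N - k)) * ∏ i ∈ Finset.range k, q ^ (i + 1) := by
  rw [Finset.prod_pow_eq_pow_sum, Finset.prod_pow_eq_pow_sum, sum_aux k N hk, pow_add]

lemma Dp_split (x : ℝ) : ∀ (k N : ℕ), k ≤ N →
    Dp x N = Dp x (N - k) * ∏ i ∈ Finset.range k, (1 - x ^ (N - i)) := by
  intro k
  induction k with
  | zero => simp
  | succ k ih =>
      intro N hk
      rw [Finset.prod_range_succ, ih N (by omega)]
      obtain ⟨a, ha⟩ : ∃ a, N - k = a + 1 := ⟨N - k - 1, by omega⟩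
      have h2 : N - (k + 1) = a := by omega
      have h3 : Dp x (a + 1) = Dp x a * (1 - x ^ (a + 1)) := Finset.prod_range_succ _ _
      rw [ha, h2, h3]
      ring

section Bridge
variable {q : ℝ} (hq : 1 < q)
include hq

lemma factor_eq (m : ℕ) : q ^ m - 1 = q ^ m * (1 - (q⁻¹) ^ m) := by
  have hq0 : q ≠ 0 := by positivity
  rw [mul_sub, mul_one, ← mul_pow, mul_inv_cancel₀ hq0, one_pow]

lemma Bp_eq (k : ℕ) :
    Bp q k = (∏ i ∈ Finset.range k, q ^ (i + 1)) * Dp q⁻¹ k := by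
  rw [Bp, Dp, ← Finset.prod_mul_distrib]
  exact Finset.prod_congr rfl fun i _ => factor_eq hq (i + 1)

lemma Ap_eq (N k : ℕ) (hk : k ≤ N) :
    Ap q N k = q ^ (k * (N - k)) * (∏ i ∈ Finset.range k, q ^ (i + 1))
      * ∏ i ∈ Finset.range k, (1 - q⁻¹ ^ (N - i)) := by
  rw [Ap]
  have h : ∏ i ∈ Finset.range k, (q ^ (N - i) - 1)
      = (∏ i ∈ Finset.range k, q ^ (N - i)) * ∏ i ∈ Finset.range k, (1 - q⁻¹ ^ (N - i)) := by
    rw [← Finset.prod_mul_distrib]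
    exact Finset.prod_congr rfl fun i _ => factor_eq hq (N - i)
  rw [h, prod_q_aux q k N hk]

lemma cg_Dp (N k : ℕ) (hk : k ≤ N) :
    cg q N k * (Dp q⁻¹ (N - k) * Dp q⁻¹ k) = q ^ (k * (N - k)) * Dp q⁻¹ N := by
  have hP1 : (∏ i ∈ Finset.range k, q ^ (i + 1)) ≠ 0 := by positivity
  have key := cg_prod_formula q N k hk
  rw [Bp_eq hq, Ap_eq hq N k hk] at key
  have hsplit := Dp_split q⁻¹ k N hk
  apply mul_right_cancel₀ hP1
  linear_combination Dp q⁻¹ (N - k) * key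
    - q ^ (k * (N - k)) * (∏ i ∈ Finset.range k, q ^ (i + 1)) * hsplit

lemma cg_eq (N k : ℕ) (hk : k ≤ N) :
    cg q N k = q ^ (k * (N - k)) * (Dp q⁻¹ N / (Dp q⁻¹ (N - k) * Dp q⁻¹ k)) := by
  have hx0 : (0 : ℝ) < q⁻¹ := by positivity
  have hx1 : q⁻¹ < 1 := inv_lt_one_of_one_lt₀ hq
  have hD : 0 < Dp q⁻¹ (N - k) * Dp q⁻¹ k :=
    mul_pos (Dp_pos hx0 hx1 _) (Dp_pos hx0 hx1 _)
  rw [← mul_div_assoc, eq_div_iff hD.ne']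
  linear_combination cg_Dp hq N k hk

end Bridge


lemma summable_theta_nat {x : ℝ} (hx0 : 0 < x) (hx1 : x < 1) :
    Summable (fun n : ℕ => x ^ (((n : ℝ) + 1 / 2) ^ 2)) := by
  refine Summable.of_nonneg_of_le (fun n => Real.rpow_nonneg hx0.le _) (fun n => ?_)
    (summable_geometric_of_lt_one hx0.le hx1)
  calc x ^ (((n : ℝ) + 1 / 2) ^ 2) ≤ x ^ ((n : ℝ)) :=
        Real.rpow_le_rpow_of_exponent_ge hx0 hx1.le (by nlinarith [sq_nonneg ((n : ℝ))])
    _ = x ^ n := Real.rpow_natCast x n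

lemma summable_theta_int {x : ℝ} (hx0 : 0 < x) (hx1 : x < 1) :
    Summable (fun j : ℤ => x ^ (((j : ℝ) + 1 / 2) ^ 2)) := by
  refine Summable.of_nat_of_neg_add_one (summable_theta_nat hx0 hx1) ?_
  refine (summable_theta_nat hx0 hx1).congr fun n => ?_
  congr 1
  push_cast
  ring

/-- The summand appearing in the odd Galois number asymptotics. -/
noncomputable def Fa (q : ℝ) (n : ℕ) (j : ℤ) : ℝ :=
  if -(n : ℤ) - 1 ≤ j ∧ j ≤ (n : ℤ) then
    Dp q⁻¹ (2 * n + 1) / (Dp q⁻¹ (((n : ℤ) - j).toNat) * Dp q⁻¹ (((n : ℤ) + 1 + j).toNat))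
      * q⁻¹ ^ (((j : ℝ) + 1 / 2) ^ 2)
  else 0

/-- For every real `q > 1`,
`lim_{n→∞} G_{2n+1}(q) · q^{−(2n+1)²/4} = θ₂(0,q⁻¹) / φ(q⁻¹)`. -/
theorem galois_asymptotics_odd (q : ℝ) (hq : 1 < q) :
    Tendsto
      (fun n : ℕ => galoisNumber (2 * n + 1) q * q ^ (-((2 * (n : ℝ) + 1) ^ 2 / 4)))
      atTop (𝓝 (theta2 q⁻¹ / eulerFn q⁻¹)) := by
  have hq0 : (0 : ℝ) < q := lt_trans one_pos hq
  have hx0 : (0 : ℝ) < q⁻¹ := by positivity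
  have hx1 : q⁻¹ < 1 := inv_lt_one_of_one_lt₀ hq
  have hφ : 0 < eulerFn q⁻¹ := eulerFn_pos hx0 hx1
  -- dominating function
  have hsum : Summable (fun j : ℤ => (eulerFn q⁻¹)⁻¹ * q⁻¹ ^ (((j : ℝ) + 1 / 2) ^ 2)) :=
    (summable_theta_int hx0 hx1).mul_left _
  -- pointwise convergence
  have hpt : ∀ j : ℤ, Tendsto (fun n : ℕ => Fa q n j) atTop
      (𝓝 (q⁻¹ ^ (((j : ℝ) + 1 / 2) ^ 2) / eulerFn q⁻¹)) := by
    intro j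
    have ha : Tendsto (fun n : ℕ => ((n : ℤ) - j).toNat) atTop atTop :=
      tendsto_atTop_atTop.2 fun b => ⟨b + j.natAbs, fun n hn => by omega⟩
    have hb : Tendsto (fun n : ℕ => ((n : ℤ) + 1 + j).toNat) atTop atTop :=
      tendsto_atTop_atTop.2 fun b => ⟨b + j.natAbs, fun n hn => by omega⟩
    have hc : Tendsto (fun n : ℕ => 2 * n + 1) atTop atTop :=
      tendsto_atTop_atTop.2 fun b => ⟨b, fun n hn => by omega⟩
    have hDN := (tendsto_Dp hx0 hx1).comp hc
    have hDa := (tendsto_Dp hx0 hx1).comp ha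
    have hDb := (tendsto_Dp hx0 hx1).comp hb
    have hne : eulerFn q⁻¹ * eulerFn q⁻¹ ≠ 0 := (mul_pos hφ hφ).ne'
    have hmain := (hDN.div (hDa.mul hDb) hne).mul_const (q⁻¹ ^ (((j : ℝ) + 1 / 2) ^ 2))
    have heq : eulerFn q⁻¹ / (eulerFn q⁻¹ * eulerFn q⁻¹) * q⁻¹ ^ (((j : ℝ) + 1 / 2) ^ 2)
        = q⁻¹ ^ (((j : ℝ) + 1 / 2) ^ 2) / eulerFn q⁻¹ := by
      field_simp
    rw [heq] at hmain
    refine hmain.congr' ?_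
    filter_upwards [eventually_ge_atTop (j.natAbs + 1)] with n hn
    rw [Fa, if_pos (by omega)]
    rfl
  -- uniform bound
  have hbd : ∀ (n : ℕ) (j : ℤ),
      ‖Fa q n j‖ ≤ (eulerFn q⁻¹)⁻¹ * q⁻¹ ^ (((j : ℝ) + 1 / 2) ^ 2) := by
    intro n j
    have hrpow : (0 : ℝ) ≤ q⁻¹ ^ (((j : ℝ) + 1 / 2) ^ 2) := Real.rpow_nonneg hx0.le _
    rw [Fa]
    split_ifs with h
    · have hDa : 0 < Dp q⁻¹ (((n : ℤ) - j).toNat) := Dp_pos hx0 hx1 _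
      have hDb : 0 < Dp q⁻¹ (((n : ℤ) + 1 + j).toNat) := Dp_pos hx0 hx1 _
      have hDN : 0 < Dp q⁻¹ (2 * n + 1) := Dp_pos hx0 hx1 _
      have hle1 : Dp q⁻¹ (2 * n + 1) ≤ Dp q⁻¹ (((n : ℤ) - j).toNat) :=
        Dp_anti hx0 hx1 (by omega)
      have hle2 : eulerFn q⁻¹ ≤ Dp q⁻¹ (((n : ℤ) + 1 + j).toNat) := eulerFn_le_Dp hx0 hx1 _
      rw [Real.norm_eq_abs, abs_of_nonneg
        (mul_nonneg (div_nonneg hDN.le (mul_pos hDa hDb).le) hrpow)]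
      refine mul_le_mul_of_nonneg_right ?_ hrpow
      rw [div_le_iff₀ (mul_pos hDa hDb)]
      have hinv : (eulerFn q⁻¹)⁻¹ * eulerFn q⁻¹ = 1 := inv_mul_cancel₀ hφ.ne'
      calc Dp q⁻¹ (2 * n + 1) ≤ Dp q⁻¹ (((n : ℤ) - j).toNat) := hle1
        _ = (eulerFn q⁻¹)⁻¹ * eulerFn q⁻¹ * Dp q⁻¹ (((n : ℤ) - j).toNat) := by
            rw [hinv, one_mul]
        _ = (eulerFn q⁻¹)⁻¹ * (Dp q⁻¹ (((n : ℤ) - j).toNat) * eulerFn q⁻¹) := by ring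
        _ ≤ (eulerFn q⁻¹)⁻¹ * (Dp q⁻¹ (((n : ℤ) - j).toNat) * Dp q⁻¹ (((n : ℤ) + 1 + j).toNat)) :=
            mul_le_mul_of_nonneg_left (mul_le_mul_of_nonneg_left hle2 hDa.le)
              (inv_nonneg.2 hφ.le)
    · rw [norm_zero]
      positivity
  have Htend := tendsto_tsum_of_dominated_convergence hsum hpt (Eventually.of_forall hbd)
  -- identification of the limit
  have h2 : ∑' j : ℤ, q⁻¹ ^ (((j : ℝ) + 1 / 2) ^ 2) / eulerFn q⁻¹
      = theta2 q⁻¹ / eulerFn q⁻¹ := by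
    rw [theta2, tsum_div_const]
  rw [h2] at Htend
  -- identification of the partial sums
  refine Htend.congr fun n => ?_
  have hsupp : ∀ j ∉ Finset.Icc (-(n : ℤ) - 1) (n : ℤ), Fa q n j = 0 := by
    intro j hj
    rw [Fa, if_neg]
    simpa [Finset.mem_Icc, not_and_or] using hj
  rw [tsum_eq_sum hsupp, galoisNumber, Finset.sum_mul]
  refine (Finset.sum_nbij' (fun k : ℕ => (k : ℤ) - ((n : ℤ) + 1))
    (fun j : ℤ => (j + ((n : ℤ) + 1)).toNat) ?_ ?_ ?_ ?_ ?_).symm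
  · intro k hk
    simp only [Finset.mem_range] at hk
    simp only [Finset.mem_Icc]
    omega
  · intro j hj
    simp only [Finset.mem_Icc] at hj
    simp only [Finset.mem_range]
    omega
  · intro k hk
    simp only [Finset.mem_range] at hk
    show ((((k : ℤ) - ((n : ℤ) + 1)) + ((n : ℤ) + 1)).toNat) = k
    omega
  · intro j hj
    simp only [Finset.mem_Icc] at hj
    show (((j + ((n : ℤ) + 1)).toNat : ℤ)) - ((n : ℤ) + 1) = j
    omega
  · intro k hk
    simp only [Finset.mem_range] at hk
    have hkN : k ≤ 2 * n + 1 := by omega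
    have hcond : -(n : ℤ) - 1 ≤ (k : ℤ) - ((n : ℤ) + 1) ∧ (k : ℤ) - ((n : ℤ) + 1) ≤ (n : ℤ) := by
      omega
    rw [Fa, if_pos hcond]
    have h1 : (((n : ℤ) - ((k : ℤ) - ((n : ℤ) + 1))).toNat) = 2 * n + 1 - k := by omega
    have h2 : (((n : ℤ) + 1 + ((k : ℤ) - ((n : ℤ) + 1))).toNat) = k := by omega
    rw [h1, h2]
    have hcg : (Polynomial.aeval q) (gaussBinomial (2 * n + 1) k) = cg q (2 * n + 1) k := rfl
    rw [hcg, cg_eq hq (2 * n + 1) k hkN]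
    have hexp : (q : ℝ) ^ (k * (2 * n + 1 - k)) * q ^ (-((2 * (n : ℝ) + 1) ^ 2 / 4))
        = q⁻¹ ^ (((((k : ℤ) - ((n : ℤ) + 1)) : ℝ) + 1 / 2) ^ 2) := by
      rw [← Real.rpow_natCast q (k * (2 * n + 1 - k)), ← Real.rpow_add hq0,
        Real.inv_rpow hq0.le, ← Real.rpow_neg hq0.le]
      congr 1
      push_cast [Nat.cast_sub hkN]
      ring
    calc q ^ (k * (2 * n + 1 - k))
          * (Dp q⁻¹ (2 * n + 1) / (Dp q⁻¹ (2 * n + 1 - k) * Dp q⁻¹ k))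
          * q ^ (-((2 * (n : ℝ) + 1) ^ 2 / 4))
        = Dp q⁻¹ (2 * n + 1) / (Dp q⁻¹ (2 * n + 1 - k) * Dp q⁻¹ k)
          * (q ^ (k * (2 * n + 1 - k)) * q ^ (-((2 * (n : ℝ) + 1) ^ 2 / 4))) := by ring
      _ = _ := by rw [hexp]; norm_cast
end

section
/- For every real q > 1, lim_{n→∞} G_{2n}(q) · q^{−n²} = θ₃(0, q^{−1}) / φ(q^{−1}), where θ₃(0,x) = Σ_{k ∈ ℤ} x^{k²} and φ(x) = ∏_{m=1}^{∞} (1 − x^m). -/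
open scoped BigOperators
open Filter Topology

namespace GaloisAsym

/-! ### The partial products of Euler's function -/

noncomputable def P (x : ℝ) (m : ℕ) : ℝ := ∏ i ∈ Finset.range m, (1 - x ^ (i + 1))

section Euler

variable {x : ℝ} (hx : 0 < x) (hx1 : x < 1)
include hx hx1

lemma factor_pos (i : ℕ) : 0 < 1 - x ^ (i + 1) := by
  have h : x ^ (i + 1) < 1 := pow_lt_one₀ hx.le hx1 (by omega)
  linarith

omit hx1 in
lemma factor_lt_one (i : ℕ) : 1 - x ^ (i + 1) < 1 := by
  have := pow_pos hx (i + 1); linarith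

lemma P_pos (m : ℕ) : 0 < P x m :=
  Finset.prod_pos fun i _ => factor_pos hx hx1 i

lemma P_le_one (m : ℕ) : P x m ≤ 1 :=
  Finset.prod_le_one (fun i _ => (factor_pos hx hx1 i).le)
    (fun i _ => (factor_lt_one hx i).le)

omit hx hx1 in
lemma P_succ (m : ℕ) : P x (m + 1) = P x m * (1 - x ^ (m + 1)) :=
  Finset.prod_range_succ _ m

lemma P_antitone : Antitone (P x) := by
  apply antitone_nat_of_succ_le
  intro n
  rw [P_succ]
  have h1 := P_pos hx hx1 n
  have h3 := factor_lt_one hx (i := n)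
  have h4 := factor_pos hx hx1 n
  nlinarith

lemma summable_log : Summable (fun n : ℕ => Real.log (1 - x ^ (n + 1))) := by
  rw [← summable_neg_iff]
  have hgeo : Summable (fun n : ℕ => (1 - x)⁻¹ * x ^ (n + 1)) := by
    apply Summable.mul_left
    exact ((summable_geometric_of_lt_one hx.le hx1).mul_left x).congr
      (fun n => by rw [pow_succ]; ring)
  have hnonneg : ∀ n : ℕ, 0 ≤ -Real.log (1 - x ^ (n + 1)) := by
    intro n
    have h1 := factor_lt_one hx (i := n)
    have h2 := factor_pos hx hx1 n
    simpa using Real.log_nonpos (by linarith) (by linarith)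
  have hle : ∀ n : ℕ, -Real.log (1 - x ^ (n + 1)) ≤ (1 - x)⁻¹ * x ^ (n + 1) := by
    intro n
    have hpos := factor_pos hx hx1 n
    have hxp : (0:ℝ) < x ^ (n + 1) := pow_pos hx _
    have hle' : x ^ (n + 1) ≤ x := by
      calc x ^ (n + 1) ≤ x ^ 1 := pow_le_pow_of_le_one hx.le hx1.le (by omega)
        _ = x := pow_one x
    rw [← Real.log_inv]
    have h2 : Real.log (1 - x ^ (n + 1))⁻¹ ≤ (1 - x ^ (n + 1))⁻¹ - 1 :=
      Real.log_le_sub_one_of_pos (by positivity)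
    have h3 : (1 - x ^ (n + 1))⁻¹ - 1 = x ^ (n + 1) / (1 - x ^ (n + 1)) := by
      field_simp
      ring
    have h4 : x ^ (n + 1) / (1 - x ^ (n + 1)) ≤ x ^ (n + 1) / (1 - x) := by
      apply div_le_div_of_nonneg_left hxp.le (by linarith) (by linarith)
    calc Real.log (1 - x ^ (n + 1))⁻¹ ≤ x ^ (n + 1) / (1 - x ^ (n + 1)) := by
          rw [← h3]; exact h2
      _ ≤ x ^ (n + 1) / (1 - x) := h4
      _ = (1 - x)⁻¹ * x ^ (n + 1) := by ring
  exact Summable.of_nonneg_of_le hnonneg hle hgeo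

lemma hasProd_euler : HasProd (fun n : ℕ => 1 - x ^ (n + 1)) (eulerFn x) :=
  (Real.multipliable_of_summable_log (fun n => factor_pos hx hx1 n)
    (summable_log hx hx1)).hasProd

lemma eulerFn_pos : 0 < eulerFn x := by
  have h2 := Real.rexp_tsum_eq_tprod (f := fun n : ℕ => 1 - x ^ (n + 1))
    (fun n => factor_pos hx hx1 n) (summable_log hx hx1)
  rw [eulerFn, ← h2]
  exact Real.exp_pos _

lemma tendsto_P : Tendsto (P x) atTop (𝓝 (eulerFn x)) :=
  (hasProd_euler hx hx1).tendsto_prod_nat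

lemma eulerFn_le_P (m : ℕ) : eulerFn x ≤ P x m := by
  apply le_of_tendsto (tendsto_P hx hx1)
  filter_upwards [eventually_ge_atTop m] with n hn
  exact P_antitone hx hx1 hn

lemma summable_xsq : Summable (fun j : ℤ => x ^ ((j : ℝ) ^ 2)) := by
  have key : ∀ j : ℤ, x ^ ((j : ℝ) ^ 2) = x ^ (j.natAbs ^ 2) := by
    intro j
    have h1 : ((j : ℝ)) ^ 2 = ((j.natAbs ^ 2 : ℕ) : ℝ) := by
      push_cast [Nat.cast_natAbs]
      rw [sq_abs]
    rw [h1, Real.rpow_natCast]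
  have hsum : Summable (fun j : ℤ => x ^ j.natAbs) := by
    apply Summable.of_nat_of_neg
    · exact (summable_geometric_of_lt_one hx.le hx1).congr (fun n => by simp)
    · exact (summable_geometric_of_lt_one hx.le hx1).congr (fun n => by simp)
  apply Summable.of_nonneg_of_le (fun j => Real.rpow_nonneg hx.le _) _ hsum
  intro j
  rw [key j]
  exact pow_le_pow_of_le_one hx.le hx1.le (Nat.le_self_pow (by norm_num) _)

end Euler

/-! ### Evaluation of the Gaussian binomials -/

lemma gaussBinomial_eq_zero : ∀ m k : ℕ, m < k → gaussBinomial m k = 0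
  | 0, _ + 1, _ => rfl
  | m + 1, k + 1, h => by
    rw [gaussBinomial, gaussBinomial_eq_zero m k (by omega),
      gaussBinomial_eq_zero m (k + 1) (by omega)]
    ring

noncomputable def D (q : ℝ) (k : ℕ) : ℝ := ∏ i ∈ Finset.range k, (q ^ (i + 1) - 1)

noncomputable def Npr (q : ℝ) (m k : ℕ) : ℝ :=
  ∏ i ∈ Finset.Ico (m - k) m, (q ^ (i + 1) - 1)

lemma aeval_succ_succ (q : ℝ) (m k : ℕ) :
    Polynomial.aeval q (gaussBinomial (m + 1) (k + 1)) =
      Polynomial.aeval q (gaussBinomial m k)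
        + q ^ (k + 1) * Polynomial.aeval q (gaussBinomial m (k + 1)) := by
  rw [gaussBinomial]
  simp [map_add, map_mul]

lemma Npr_succ_succ (q : ℝ) {m k : ℕ} (hk : k ≤ m) :
    Npr q (m + 1) (k + 1) = Npr q m k * (q ^ (m + 1) - 1) := by
  rw [Npr, Npr, Nat.succ_sub_succ]
  exact Finset.prod_Ico_succ_top (by omega) _

lemma Npr_bot (q : ℝ) {m k : ℕ} (hk : k < m) :
    Npr q m (k + 1) = (q ^ (m - k) - 1) * Npr q m k := by
  rw [Npr, Npr, Finset.prod_eq_prod_Ico_succ_bot (a := m - (k + 1)) (by omega)]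
  have h1 : m - (k + 1) + 1 = m - k := by omega
  rw [h1]

lemma key (q : ℝ) : ∀ m k : ℕ, k ≤ m →
    Polynomial.aeval q (gaussBinomial m k) * D q k = Npr q m k := by
  intro m
  induction m with
  | zero =>
    intro k hk
    interval_cases k
    simp [gaussBinomial, D, Npr]
  | succ m ih =>
    intro k hk
    match k with
    | 0 => simp [gaussBinomial, D, Npr]
    | k + 1 =>
      have hkm : k ≤ m := by omega
      rw [aeval_succ_succ]
      have hD : D q (k + 1) = D q k * (q ^ (k + 1) - 1) := Finset.prod_range_succ _ k
      rw [Npr_succ_succ q hkm, hD]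
      rcases eq_or_lt_of_le hkm with rfl | hlt
      · rw [gaussBinomial_eq_zero k (k + 1) (by omega)]
        have e1 := ih k le_rfl
        simp only [map_zero, mul_zero, add_zero]
        linear_combination (q ^ (k + 1) - 1) * e1
      · have e1 := ih k hkm
        have e2 := ih (k + 1) hlt
        rw [hD, Npr_bot q hlt] at e2
        have hpow : q ^ (k + 1) * q ^ (m - k) = q ^ (m + 1) := by
          rw [← pow_add]; congr 1; omega
        linear_combination (q ^ (k + 1) - 1) * e1 + q ^ (k + 1) * e2 + Npr q m k * hpow

variable {q : ℝ}

lemma eval_mul (hq : 1 < q) {m k : ℕ} (hk : k ≤ m) :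
    Polynomial.aeval q (gaussBinomial m k) * (P q⁻¹ (m - k) * P q⁻¹ k)
      = q ^ (k * (m - k)) * P q⁻¹ m := by
  have hq0 : (0:ℝ) < q := lt_trans one_pos hq
  have hqne : q ≠ 0 := ne_of_gt hq0
  have hfac : ∀ i : ℕ, q ^ (i + 1) - 1 = q ^ (i + 1) * (1 - q⁻¹ ^ (i + 1)) := by
    intro i
    have h : q ^ (i + 1) * (q⁻¹) ^ (i + 1) = 1 := by
      rw [← mul_pow, mul_inv_cancel₀ hqne, one_pow]
    rw [mul_sub, mul_one, h]
  have hC : D q k = (∏ i ∈ Finset.range k, q ^ (i + 1)) * P q⁻¹ k := by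
    rw [D, P, ← Finset.prod_mul_distrib]
    exact Finset.prod_congr rfl fun i _ => hfac i
  have hCI : (∏ i ∈ Finset.Ico (m - k) m, q ^ (i + 1))
      = q ^ ((m - k) * k) * ∏ i ∈ Finset.range k, q ^ (i + 1) := by
    rw [Finset.prod_Ico_eq_prod_range]
    have h1 : m - (m - k) = k := by omega
    rw [h1]
    calc ∏ i ∈ Finset.range k, q ^ (m - k + i + 1)
        = ∏ i ∈ Finset.range k, (q ^ (m - k) * q ^ (i + 1)) := by
          refine Finset.prod_congr rfl fun i _ => ?_
          rw [← pow_add, Nat.add_assoc]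
      _ = (∏ _i ∈ Finset.range k, q ^ (m - k)) * ∏ i ∈ Finset.range k, q ^ (i + 1) :=
          Finset.prod_mul_distrib
      _ = q ^ ((m - k) * k) * ∏ i ∈ Finset.range k, q ^ (i + 1) := by
          rw [Finset.prod_const, Finset.card_range, ← pow_mul]
  have hN : Npr q m k = (q ^ ((m - k) * k) * ∏ i ∈ Finset.range k, q ^ (i + 1))
      * ∏ i ∈ Finset.Ico (m - k) m, (1 - q⁻¹ ^ (i + 1)) := by
    rw [Npr, ← hCI, ← Finset.prod_mul_distrib]
    exact Finset.prod_congr rfl fun i _ => hfac i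
  have hPm : P q⁻¹ (m - k) * ∏ i ∈ Finset.Ico (m - k) m, (1 - q⁻¹ ^ (i + 1)) = P q⁻¹ m :=
    Finset.prod_range_mul_prod_Ico _ (by omega)
  have hkey := key q m k hk
  rw [hC, hN] at hkey
  have hCne : (∏ i ∈ Finset.range k, q ^ (i + 1)) ≠ 0 := by positivity
  apply mul_left_cancel₀ hCne
  have hexp : (m - k) * k = k * (m - k) := Nat.mul_comm _ _
  calc (∏ i ∈ Finset.range k, q ^ (i + 1)) *
        (Polynomial.aeval q (gaussBinomial m k) * (P q⁻¹ (m - k) * P q⁻¹ k))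
      = (Polynomial.aeval q (gaussBinomial m k) *
          ((∏ i ∈ Finset.range k, q ^ (i + 1)) * P q⁻¹ k)) * P q⁻¹ (m - k) := by ring
    _ = ((q ^ ((m - k) * k) * ∏ i ∈ Finset.range k, q ^ (i + 1))
          * ∏ i ∈ Finset.Ico (m - k) m, (1 - q⁻¹ ^ (i + 1))) * P q⁻¹ (m - k) := by rw [hkey]
    _ = (q ^ ((m - k) * k) * ∏ i ∈ Finset.range k, q ^ (i + 1))
          * (P q⁻¹ (m - k) * ∏ i ∈ Finset.Ico (m - k) m, (1 - q⁻¹ ^ (i + 1))) := by ring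
    _ = (∏ i ∈ Finset.range k, q ^ (i + 1)) * (q ^ (k * (m - k)) * P q⁻¹ m) := by
          rw [hPm, hexp]; ring

/-! ### The summands, indexed by `ℤ` -/

noncomputable def F (q : ℝ) (n : ℕ) (j : ℤ) : ℝ :=
  if |j| ≤ (n : ℤ) then
    q⁻¹ ^ ((j : ℝ) ^ 2)
      * (P q⁻¹ (2 * n) / (P q⁻¹ ((n : ℤ) - j).toNat * P q⁻¹ ((n : ℤ) + j).toNat))
  else 0

lemma sum_eq (hq : 1 < q) (n : ℕ) :
    galoisNumber (2 * n) q * q ^ (-((n : ℝ) ^ 2)) = ∑' j : ℤ, F q n j := by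
  classical
  have hq0 : (0:ℝ) < q := lt_trans one_pos hq
  have hx : (0:ℝ) < q⁻¹ := inv_pos.2 hq0
  have hx1 : q⁻¹ < 1 := inv_lt_one_of_one_lt₀ hq
  have hinj : Function.Injective (fun k : ℕ => (k : ℤ) - n) := by
    intro a b h; simpa using h
  rw [tsum_eq_sum (s := (Finset.range (2 * n + 1)).map ⟨fun k : ℕ => (k : ℤ) - n, hinj⟩) ?_]
  · rw [Finset.sum_map, galoisNumber, Finset.sum_mul]
    refine Finset.sum_congr rfl fun k hk => ?_
    simp only [Function.Embedding.coeFn_mk]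
    have hk2 : k ≤ 2 * n := by
      have := Finset.mem_range.mp hk; omega
    have habs : |(k : ℤ) - n| ≤ (n : ℤ) := abs_le.mpr (by omega)
    rw [F, if_pos habs]
    have h1 : ((n : ℤ) - ((k : ℤ) - n)).toNat = 2 * n - k := by omega
    have h2 : ((n : ℤ) + ((k : ℤ) - n)).toNat = k := by omega
    rw [h1, h2]
    have hden : P q⁻¹ (2 * n - k) * P q⁻¹ k ≠ 0 :=
      ne_of_gt (mul_pos (P_pos hx hx1 _) (P_pos hx hx1 _))
    have heval : Polynomial.aeval q (gaussBinomial (2 * n) k)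
        = q ^ (k * (2 * n - k)) * P q⁻¹ (2 * n) / (P q⁻¹ (2 * n - k) * P q⁻¹ k) := by
      rw [eq_div_iff hden]
      exact eval_mul hq hk2
    have hpow : (q ^ (k * (2 * n - k)) : ℝ) * q ^ (-((n : ℝ) ^ 2))
        = q⁻¹ ^ ((((k : ℤ) - n : ℤ) : ℝ) ^ 2) := by
      rw [← Real.rpow_natCast q (k * (2 * n - k)), ← Real.rpow_add hq0]
      rw [Real.inv_rpow hq0.le, ← Real.rpow_neg hq0.le]
      congr 1
      push_cast [Nat.cast_sub hk2]
      ring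
    calc Polynomial.aeval q (gaussBinomial (2 * n) k) * q ^ (-((n : ℝ) ^ 2))
        = (q ^ (k * (2 * n - k)) * q ^ (-((n : ℝ) ^ 2)))
            * (P q⁻¹ (2 * n) / (P q⁻¹ (2 * n - k) * P q⁻¹ k)) := by
          rw [heval]; ring
      _ = q⁻¹ ^ ((((k : ℤ) - n : ℤ) : ℝ) ^ 2)
            * (P q⁻¹ (2 * n) / (P q⁻¹ (2 * n - k) * P q⁻¹ k)) := by rw [hpow]
  · intro j hj
    rw [F, if_neg]
    intro habs
    rw [abs_le] at habs
    apply hj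
    rw [Finset.mem_map]
    refine ⟨(j + n).toNat, Finset.mem_range.mpr (by omega), ?_⟩
    simp only [Function.Embedding.coeFn_mk]
    omega

lemma F_tendsto (hq : 1 < q) (j : ℤ) :
    Tendsto (fun n : ℕ => F q n j) atTop
      (𝓝 (q⁻¹ ^ ((j : ℝ) ^ 2) / eulerFn q⁻¹)) := by
  have hq0 : (0:ℝ) < q := lt_trans one_pos hq
  have hx : (0:ℝ) < q⁻¹ := inv_pos.2 hq0
  have hx1 : q⁻¹ < 1 := inv_lt_one_of_one_lt₀ hq
  have he : 0 < eulerFn q⁻¹ := eulerFn_pos hx hx1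
  have h2n : Tendsto (fun n : ℕ => P q⁻¹ (2 * n)) atTop (𝓝 (eulerFn q⁻¹)) :=
    (tendsto_P hx hx1).comp (tendsto_atTop_mono (fun n => by simp only [id_eq]; omega) tendsto_id)
  have ha : Tendsto (fun n : ℕ => P q⁻¹ ((n : ℤ) - j).toNat) atTop (𝓝 (eulerFn q⁻¹)) :=
    (tendsto_P hx hx1).comp
      (tendsto_atTop_mono (fun n => by omega) (tendsto_sub_atTop_nat j.natAbs))
  have hb : Tendsto (fun n : ℕ => P q⁻¹ ((n : ℤ) + j).toNat) atTop (𝓝 (eulerFn q⁻¹)) :=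
    (tendsto_P hx hx1).comp
      (tendsto_atTop_mono (fun n => by omega) (tendsto_sub_atTop_nat j.natAbs))
  have hne : eulerFn q⁻¹ * eulerFn q⁻¹ ≠ 0 := by positivity
  have hlim : Tendsto
      (fun n : ℕ => q⁻¹ ^ ((j : ℝ) ^ 2)
        * (P q⁻¹ (2 * n) / (P q⁻¹ ((n : ℤ) - j).toNat * P q⁻¹ ((n : ℤ) + j).toNat)))
      atTop (𝓝 (q⁻¹ ^ ((j : ℝ) ^ 2) * (eulerFn q⁻¹ / (eulerFn q⁻¹ * eulerFn q⁻¹)))) :=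
    tendsto_const_nhds.mul (h2n.div (ha.mul hb) hne)
  have hval : q⁻¹ ^ ((j : ℝ) ^ 2) * (eulerFn q⁻¹ / (eulerFn q⁻¹ * eulerFn q⁻¹))
      = q⁻¹ ^ ((j : ℝ) ^ 2) / eulerFn q⁻¹ := by
    field_simp
  rw [hval] at hlim
  apply hlim.congr'
  filter_upwards [eventually_ge_atTop j.natAbs] with n hn
  rw [F, if_pos (abs_le.mpr (by omega))]

lemma F_bound (hq : 1 < q) (n : ℕ) (j : ℤ) :
    ‖F q n j‖ ≤ (eulerFn q⁻¹ * eulerFn q⁻¹)⁻¹ * q⁻¹ ^ ((j : ℝ) ^ 2) := by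
  have hq0 : (0:ℝ) < q := lt_trans one_pos hq
  have hx : (0:ℝ) < q⁻¹ := inv_pos.2 hq0
  have hx1 : q⁻¹ < 1 := inv_lt_one_of_one_lt₀ hq
  have he : 0 < eulerFn q⁻¹ := eulerFn_pos hx hx1
  have hrp : (0:ℝ) ≤ q⁻¹ ^ ((j : ℝ) ^ 2) := Real.rpow_nonneg hx.le _
  rw [F]
  split_ifs with h
  · have hFnn : 0 ≤ q⁻¹ ^ ((j : ℝ) ^ 2)
        * (P q⁻¹ (2 * n) / (P q⁻¹ ((n : ℤ) - j).toNat * P q⁻¹ ((n : ℤ) + j).toNat)) := by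
      have := P_pos hx hx1 (2 * n)
      have := P_pos hx hx1 ((n : ℤ) - j).toNat
      have := P_pos hx hx1 ((n : ℤ) + j).toNat
      positivity
    rw [Real.norm_of_nonneg hFnn]
    have hdiv : P q⁻¹ (2 * n) / (P q⁻¹ ((n : ℤ) - j).toNat * P q⁻¹ ((n : ℤ) + j).toNat)
        ≤ 1 / (eulerFn q⁻¹ * eulerFn q⁻¹) := by
      apply div_le_div₀ (by norm_num) (P_le_one hx hx1 _) (by positivity)
      exact mul_le_mul (eulerFn_le_P hx hx1 _) (eulerFn_le_P hx hx1 _) he.le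
        (P_pos hx hx1 _).le
    calc q⁻¹ ^ ((j : ℝ) ^ 2)
          * (P q⁻¹ (2 * n) / (P q⁻¹ ((n : ℤ) - j).toNat * P q⁻¹ ((n : ℤ) + j).toNat))
        ≤ q⁻¹ ^ ((j : ℝ) ^ 2) * (1 / (eulerFn q⁻¹ * eulerFn q⁻¹)) :=
          mul_le_mul_of_nonneg_left hdiv hrp
      _ = (eulerFn q⁻¹ * eulerFn q⁻¹)⁻¹ * q⁻¹ ^ ((j : ℝ) ^ 2) := by ring
  · rw [norm_zero]
    positivity

end GaloisAsym

open GaloisAsym in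
/-- For every real `q > 1`, `lim_{n→∞} G_{2n}(q) · q^{−n²} = θ₃(0,q⁻¹) / φ(q⁻¹)`. -/
theorem galois_asymptotics_even (q : ℝ) (hq : 1 < q) :
    Tendsto (fun n : ℕ => galoisNumber (2 * n) q * q ^ (-((n : ℝ) ^ 2)))
      atTop (𝓝 (theta3 q⁻¹ / eulerFn q⁻¹)) := by
  have hq0 : (0:ℝ) < q := lt_trans one_pos hq
  have hx : (0:ℝ) < q⁻¹ := inv_pos.2 hq0
  have hx1 : q⁻¹ < 1 := inv_lt_one_of_one_lt₀ hq
  have hmain : Tendsto (fun n : ℕ => ∑' j : ℤ, F q n j) atTop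
      (𝓝 (∑' j : ℤ, q⁻¹ ^ ((j : ℝ) ^ 2) / eulerFn q⁻¹)) := by
    apply tendsto_tsum_of_dominated_convergence
      (bound := fun j : ℤ => (eulerFn q⁻¹ * eulerFn q⁻¹)⁻¹ * q⁻¹ ^ ((j : ℝ) ^ 2))
    · exact (summable_xsq hx hx1).mul_left _
    · exact fun j => F_tendsto hq j
    · exact Eventually.of_forall (fun n j => F_bound hq n j)
  have hth : theta3 q⁻¹ / eulerFn q⁻¹ = ∑' j : ℤ, q⁻¹ ^ ((j : ℝ) ^ 2) / eulerFn q⁻¹ := by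
    rw [theta3, tsum_div_const]
  rw [hth]
  exact hmain.congr (fun n => (sum_eq hq n).symm)
end
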